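/- Let G be a finite group with a chain of subgroups H_1 < H_2 < ⋯ < H_k = G where k ≥ 3. For i = 2, …, k−1, let T_i be a right transversal of H_{i-1} in H_i and let h_i ∈ H_{i+1} \ H_i be an element normalizing H_i. Set A_1 = H_1 and A_i = T_i h_i for i = 2, …, k−1. Let A_k be a right transversal of H_{k-1} in G such that the unique element t' of A_k ∩ H_{k-1} satisfies t' ∈ H_2 \ H_1, and the unique element s' of A_k ∩ H_{k-1} h_{k-1} satisfies s' ∉ A_{k-1}. Then A_k is disjoint from A_i for every i = 1, 2, …, k−1. -/

import Mathlib

/-! Each `A i` with `i < k` lies in a set `U` (`H (k-1)`, or `H (k-1) * {h (k-1)}` when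
`i = k - 1`) that `Ak` meets in a single point, and that point is not in `A i`. For `1 < i < k-1`
this is because `t' ∈ H 2 ≤ H i`, while `T i * {h i}` avoids `H i` since `h i ∉ H i`. -/

open Pointwise

/-- `T` is a right transversal of `H` in `K` (for subgroups `H ≤ K` of `G`): `T ⊆ K` and every
right coset of `H` meeting `K` contains exactly one element of `T`; equivalently, for each
`g ∈ K` there is a unique `t ∈ T` with `g * t⁻¹ ∈ H`, i.e. lying in the same right coset. -/
def IsRightTransversal {G : Type*} [Group G] (H K : Subgroup G) (T : Set G) : Prop :=
  T ⊆ (K : Set G) ∧ ∀ g ∈ K, ∃! t, t ∈ T ∧ g * t⁻¹ ∈ H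

lemma monotoneOn_Icc_of_le_succ {α : Type*} [Preorder α] {f : ℕ → α} {a b : ℕ}
    (hf : ∀ i, a ≤ i → i < b → f i ≤ f (i + 1)) : MonotoneOn f (Set.Icc a b) :=
  monotoneOn_of_le_succ Set.ordConnected_Icc fun i _ hi hi' ↦ by
    rw [Order.succ_eq_add_one] at hi' ⊢
    exact hf i hi.1 (by grind)

lemma Set.disjoint_of_subset_of_inter_eq_singleton {α : Type*} {S U B : Set α} {a : α}
    (hSU : S ⊆ U) (hBU : B ∩ U = {a}) (haS : a ∉ S) : Disjoint S B :=
  Set.disjoint_left.2 fun x hxS hxB ↦ by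
    have hx : x ∈ B ∩ U := ⟨hxB, hSU hxS⟩
    rw [hBU, Set.mem_singleton_iff] at hx
    exact haS (hx ▸ hxS)

namespace Subgroup

variable {G : Type*} [Group G] {K : Subgroup G} {T : Set G} {g : G}

lemma mul_singleton_subset (hT : T ⊆ K) (hg : g ∈ K) : T * {g} ⊆ K := by
  rintro _ ⟨t, ht, _, rfl, rfl⟩
  exact K.mul_mem (hT ht) hg

lemma disjoint_mul_singleton (hT : T ⊆ K) (hg : g ∉ K) : Disjoint (T * {g} : Set G) K := by
  rw [Set.disjoint_left]
  rintro _ ⟨t, ht, _, rfl, rfl⟩ htg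
  exact hg ((K.mul_mem_cancel_left (hT ht)).1 htg)

end Subgroup

theorem last_factor_disjoint_general {G : Type*} [Group G]
    {k : ℕ} (H : ℕ → Subgroup G) (T : ℕ → Set G) (h : ℕ → G)
    (A : ℕ → Set G) (Ak : Set G) (t' s' : G)
    (hchain : ∀ i, 1 ≤ i → i < k → H i < H (i + 1))
    (hT : ∀ i, 2 ≤ i → i ≤ k - 1 → IsRightTransversal (H (i - 1)) (H i) (T i))
    (hh : ∀ i, 2 ≤ i → i ≤ k - 1 →
      h i ∈ H (i + 1) ∧ h i ∉ H i ∧ h i ∈ Subgroup.normalizer (H i : Set G))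
    (hA1 : A 1 = (H 1 : Set G))
    (hA : ∀ i, 2 ≤ i → i ≤ k - 1 → A i = T i * ({h i} : Set G))
    (ht' : Ak ∩ (H (k - 1) : Set G) = {t'}) (ht'2 : t' ∈ H 2) (ht'1 : t' ∉ H 1)
    (hs' : Ak ∩ ((H (k - 1) : Set G) * ({h (k - 1)} : Set G)) = {s'})
    (hs'A : s' ∉ A (k - 1)) :
    ∀ i, 1 ≤ i → i ≤ k - 1 → Disjoint (A i) Ak := by
  have hmono : MonotoneOn H (Set.Icc 1 k) :=
    monotoneOn_Icc_of_le_succ fun i hi hik ↦ (hchain i hi hik).le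
  have hle {i j : ℕ} (hi : 1 ≤ i) (hij : i ≤ j) (hj : j ≤ k) : H i ≤ H j :=
    hmono ⟨hi, hij.trans hj⟩ ⟨hi.trans hij, hj⟩ hij
  intro i hi hik
  obtain rfl | hi2 : i = 1 ∨ 2 ≤ i := by omega
  · rw [hA1]
    exact Set.disjoint_of_subset_of_inter_eq_singleton (hle le_rfl hik (by omega)) ht' ht'1
  have hTi : T i ⊆ H i := (hT i hi2 hik).1
  rw [hA i hi2 hik]
  obtain rfl | hik' : i = k - 1 ∨ i + 1 ≤ k - 1 := by omega
  · exact Set.disjoint_of_subset_of_inter_eq_singleton (Set.mul_subset_mul_right hTi) hs'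
      (hA _ hi2 hik ▸ hs'A)
  have ht'A : t' ∉ T i * {h i} :=
    Set.disjoint_right.1 (Subgroup.disjoint_mul_singleton hTi (hh i hi2 hik).2.1)
      (hle (by omega) hi2 (by omega) ht'2)
  have hAH : T i * {h i} ⊆ (H (k - 1) : Set G) :=
    (Subgroup.mul_singleton_subset (hTi.trans (hle hi i.le_succ (by omega))) (hh i hi2 hik).1).trans
      (hle (by omega) hik' (by omega))
  exact Set.disjoint_of_subset_of_inter_eq_singleton hAH ht' ht'A

/-- Let `G` be a finite group with a chain of subgroups `H_1 < H_2 < ⋯ < H_k = G`, `k ≥ 3`.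
For `i = 2, …, k-1`, let `T_i` be a right transversal of `H_{i-1}` in `H_i` and let
`h_i ∈ H_{i+1} \ H_i` normalize `H_i`.  Set `A_1 = H_1` and `A_i = T_i h_i` for
`i = 2, …, k-1`.  Let `A_k` be a right transversal of `H_{k-1}` in `G` such that the unique
element `t'` of `A_k ∩ H_{k-1}` satisfies `t' ∈ H_2 \ H_1` and the unique element `s'` of
`A_k ∩ H_{k-1} h_{k-1}` satisfies `s' ∉ A_{k-1}`.  Then `A_k` is disjoint from each of
`A_1, …, A_{k-1}`. -/
theorem last_factor_disjoint {G : Type*} [Group G] [Finite G]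
    {k : ℕ} (hk : 3 ≤ k) (H : ℕ → Subgroup G) (T : ℕ → Set G) (h : ℕ → G)
    (A : ℕ → Set G) (Ak : Set G) (t' s' : G)
    (hchain : ∀ i, 1 ≤ i → i < k → H i < H (i + 1))
    (hHk : H k = ⊤)
    (hT : ∀ i, 2 ≤ i → i ≤ k - 1 → IsRightTransversal (H (i - 1)) (H i) (T i))
    (hh : ∀ i, 2 ≤ i → i ≤ k - 1 →
      h i ∈ H (i + 1) ∧ h i ∉ H i ∧ h i ∈ Subgroup.normalizer (H i : Set G))
    (hA1 : A 1 = (H 1 : Set G))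
    (hA : ∀ i, 2 ≤ i → i ≤ k - 1 → A i = T i * ({h i} : Set G))
    (hAk : IsRightTransversal (H (k - 1)) ⊤ Ak)
    (ht' : Ak ∩ (H (k - 1) : Set G) = {t'}) (ht'2 : t' ∈ H 2) (ht'1 : t' ∉ H 1)
    (hs' : Ak ∩ ((H (k - 1) : Set G) * ({h (k - 1)} : Set G)) = {s'})
    (hs'A : s' ∉ A (k - 1)) :
    ∀ i, 1 ≤ i → i ≤ k - 1 → Disjoint (A i) Ak :=
  last_factor_disjoint_general H T h A Ak t' s' hchain hT hh hA1 hA ht' ht'2 ht'1 hs' hs'A
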